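/- arXiv:0810.3374 — 4 statements merged into one kernel-verified Lean document; each statement's English description precedes it below -/
import Mathlib

section
/- Let Π = {(u₁,u₂,u₃) ∈ ℝ³ : u₁+u₂+u₃ = 0} and, for k ∈ {1,2,3} (subscripts read modulo 3), let C_k = {u ∈ Π : e^{u_k} = e^{u_{k+1}} − e^{u_{k+2}} or e^{u_k} = −(e^{u_{k+1}} − e^{u_{k+2}}), and u_k ≤ u_{k+1}, u_k ≤ u_{k+2}}. Let M ⊂ Π be a lattice of rank 2 and d(M) its covolume (the area of a fundamental domain of M in the plane Π with the Euclidean metric inherited from ℝ³). Suppose u and u' are distinct points of M both lying on the same piece C_k, and set t = −(√6/2)·u_k and t' = −(√6/2)·u'_k, where u_k, u'_k are the k-th coordinates of u, u'. If t' ≥ t, then t' ≥ √2·d(M)·exp(√6·t/2) / (1 + exp(−2(t'−t)·log 2/√6)). -/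
/-!
Write a point of `Π` as `(a, b, c) = (u_k, u_{k+1}, u_{k+2})`. Since `a = -(b + c)`,
`e^b - e^c = e^{-a/2} · 2 sinh((b - c)/2)`, so on `C_k` we have `2 sinh(|b - c|/2) = e^{3a/2}`;
in particular `a < 0` and `|b - c| ≤ e^{3a/2}`, and the point is determined by `a` and `b - c`.

The form `ω(x, y) = x_k (y_{k+1} - y_{k+2}) - y_k (x_{k+1} - x_{k+2})` is an area form on `Π`,
equal to `2/√3` times the oriented Euclidean area. For two lattice points it is an integer multiple
of `ω(v, w) = ±2 d(M)/√3`, and the multiple is nonzero because two distinct points of `C_k` are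
never proportional. Bounding `|ω(u, u')|` with `|b - c| ≤ e^{3a/2}` gives
`√2 d(M) ≤ t' (e^{-√6 t/2} + e^{-√6 t'/2})`, and `√6/2 ≥ 2 log 2/√6` finishes the estimate.
-/

open Real

lemma add_rotate_three {M : Type*} [AddCommMonoid M] (x : Fin 3 → M) (k : Fin 3) :
    x k + x (k + 1) + x (k + 2) = x 0 + x 1 + x 2 := by
  fin_cases k <;> simp <;> abel

lemma funext_rotate_three {α : Type*} {x y : Fin 3 → α} (k : Fin 3) (h₀ : x k = y k)
    (h₁ : x (k + 1) = y (k + 1)) (h₂ : x (k + 2) = y (k + 2)) : x = y := by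
  funext i
  fin_cases k <;> fin_cases i <;> simp_all

/-- `(a, b, c) = (u_k, u_{k+1}, u_{k+2})` for a point `u ∈ Π` of `C_k`. -/
def OnCurvePiece (a b c : ℝ) : Prop :=
  a + b + c = 0 ∧ (exp a = exp b - exp c ∨ exp a = -(exp b - exp c)) ∧ a ≤ b ∧ a ≤ c

lemma exp_sub_exp_eq_exp_mul_sinh (b c : ℝ) :
    exp b - exp c = exp ((b + c) / 2) * (2 * sinh ((b - c) / 2)) := by
  rw [sinh_eq, mul_div_cancel₀ _ two_ne_zero, mul_sub, ← exp_add, ← exp_add]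
  ring_nf

namespace OnCurvePiece

variable {a b c a' b' c' : ℝ}

lemma two_sinh_eq_exp (h : OnCurvePiece a b c) : 2 * sinh (|b - c| / 2) = exp (3 * a / 2) := by
  obtain ⟨hsum, hexp, -⟩ := h
  have habs : exp a = |exp b - exp c| := by
    rcases hexp with h | h
    · rw [← h, abs_of_pos (exp_pos a)]
    · rw [abs_sub_comm, h, neg_sub, abs_of_pos (by linarith [exp_pos a])]
  have hmid : (b + c) / 2 = -a / 2 := by linarith
  rw [exp_sub_exp_eq_exp_mul_sinh, hmid, abs_mul, abs_of_pos (exp_pos _), abs_mul,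
    abs_two, abs_sinh, abs_div, abs_two] at habs
  have hsplit : exp (3 * a / 2) = exp a * exp (a / 2) := by rw [← exp_add]; ring_nf
  have hinv : exp (-a / 2) * exp (a / 2) = 1 := by rw [← exp_add]; ring_nf; exact exp_zero
  rw [hsplit, habs]
  linear_combination (-2 * sinh (|b - c| / 2)) * hinv

lemma neg (h : OnCurvePiece a b c) : a < 0 := by
  have hsinh := h.two_sinh_eq_exp
  obtain ⟨hsum, -, hab, hac⟩ := h
  refine lt_of_le_of_ne (by linarith) fun ha ↦ ?_
  rw [show b - c = 0 by linarith, ha] at hsinh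
  norm_num at hsinh

lemma abs_sub_le_exp (h : OnCurvePiece a b c) : |b - c| ≤ exp (3 * a / 2) := by
  have := self_le_sinh_iff.2 (show (0 : ℝ) ≤ |b - c| / 2 by positivity)
  linarith [h.two_sinh_eq_exp]

lemma abs_cross_le (h : OnCurvePiece a b c) (h' : OnCurvePiece a' b' c') (ha : a' ≤ a) :
    |a * (b' - c') - a' * (b - c)| ≤ -a' * (exp (3 * a / 2) + exp (3 * a' / 2)) := by
  have hneg := h.neg
  calc |a * (b' - c') - a' * (b - c)| ≤ |a| * |b' - c'| + |a'| * |b - c| := by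
        rw [← abs_mul, ← abs_mul]; exact abs_sub _ _
    _ ≤ -a' * exp (3 * a' / 2) + -a' * exp (3 * a / 2) := by
        rw [abs_of_neg hneg, abs_of_neg h'.neg]
        exact add_le_add (mul_le_mul (by linarith) h'.abs_sub_le_exp (abs_nonneg _) (by linarith))
          (mul_le_mul_of_nonneg_left h.abs_sub_le_exp (by linarith))
    _ = -a' * (exp (3 * a / 2) + exp (3 * a' / 2)) := by ring

lemma eq_of_cross_eq_zero (h : OnCurvePiece a b c) (h' : OnCurvePiece a' b' c')
    (hx : a * (b' - c') - a' * (b - c) = 0) : a = a' ∧ b = b' ∧ c = c' := by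
  wlog ha : a' ≤ a generalizing a b c a' b' c'
  · obtain ⟨h₁, h₂, h₃⟩ := this h' h (by linarith) (by linarith)
    exact ⟨h₁.symm, h₂.symm, h₃.symm⟩
  have hneg := h.neg
  have hneg' := h'.neg
  have habs : |a| * |b' - c'| = |a'| * |b - c| := by
    rw [← abs_mul, ← abs_mul, sub_eq_zero.1 hx]
  -- `|b - c|` grows with `a` along the curve but, by proportionality, shrinks as `a` grows
  have hsub : |b - c| ≤ |b' - c'| := by
    rw [abs_of_neg hneg, abs_of_neg hneg'] at habs
    nlinarith [abs_nonneg (b - c), abs_nonneg (b' - c')]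
  have hexp : exp (3 * a / 2) ≤ exp (3 * a' / 2) := by
    rw [← h.two_sinh_eq_exp, ← h'.two_sinh_eq_exp]
    gcongr 2 * ?_
    exact sinh_le_sinh.2 (by linarith)
  have haa : a = a' := le_antisymm (by linarith [exp_le_exp.1 hexp]) ha
  subst haa
  have hbc : b - c = b' - c' := (mul_left_cancel₀ hneg.ne (by linarith)).symm
  exact ⟨rfl, by linarith [h.1, h'.1], by linarith [h.1, h'.1]⟩

end OnCurvePiece

/-- `ω(x, y)` in the coordinates `(x_k, x_{k+1} - x_{k+2})`. -/
def cross (k : Fin 3) (x y : Fin 3 → ℝ) : ℝ :=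
  x k * (y (k + 1) - y (k + 2)) - y k * (x (k + 1) - x (k + 2))

lemma cross_smul_add_smul (k : Fin 3) (v w : Fin 3 → ℝ) (p q p' q' : ℝ) :
    cross k (p • v + q • w) (p' • v + q' • w) = (p * q' - p' * q) * cross k v w := by
  simp only [cross, Pi.add_apply, Pi.smul_apply, smul_eq_mul]
  ring

lemma abs_cross_le_abs_cross_zsmul_add_zsmul (k : Fin 3) (v w : Fin 3 → ℝ) (p q p' q' : ℤ)
    (h : cross k (p • v + q • w) (p' • v + q' • w) ≠ 0) :
    |cross k v w| ≤ |cross k (p • v + q • w) (p' • v + q' • w)| := by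
  simp only [← Int.cast_smul_eq_zsmul ℝ, cross_smul_add_smul] at h ⊢
  have hdet : p * q' - p' * q ≠ 0 := by exact_mod_cast left_ne_zero_of_mul h
  rw [abs_mul]
  exact le_mul_of_one_le_left (abs_nonneg _) (by exact_mod_cast Int.one_le_abs hdet)

lemma add_rotate_three_zsmul_add_zsmul {v w : Fin 3 → ℝ} (hv : v 0 + v 1 + v 2 = 0)
    (hw : w 0 + w 1 + w 2 = 0) (p q : ℤ) (k : Fin 3) :
    (p • v + q • w) k + (p • v + q • w) (k + 1) + (p • v + q • w) (k + 2) = 0 := by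
  rw [add_rotate_three]
  simp only [Pi.add_apply, Pi.smul_apply, smul_eq_mul, ← Int.cast_smul_eq_zsmul ℝ]
  linear_combination (p : ℝ) * hv + (q : ℝ) * hw

lemma cross_eq_of_sum_eq_zero {v w : Fin 3 → ℝ} (hv : v 0 + v 1 + v 2 = 0)
    (hw : w 0 + w 1 + w 2 = 0) (k : Fin 3) : cross k v w = 2 * (v 0 * w 1 - v 1 * w 0) := by
  have hv2 : v 2 = -v 0 - v 1 := by linarith
  have hw2 : w 2 = -w 0 - w 1 := by linarith
  fin_cases k <;> simp [cross] <;> rw [hv2, hw2] <;> ring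

lemma sqrt_crossProduct_sq_eq_abs_cross {v w : Fin 3 → ℝ} (hv : v 0 + v 1 + v 2 = 0)
    (hw : w 0 + w 1 + w 2 = 0) (k : Fin 3) :
    √((v 1 * w 2 - v 2 * w 1) ^ 2 + (v 2 * w 0 - v 0 * w 2) ^ 2 + (v 0 * w 1 - v 1 * w 0) ^ 2) =
      √3 / 2 * |cross k v w| := by
  have e₁ : v 1 * w 2 - v 2 * w 1 = v 0 * w 1 - v 1 * w 0 := by
    linear_combination v 1 * hw - w 1 * hv
  have e₂ : v 2 * w 0 - v 0 * w 2 = v 0 * w 1 - v 1 * w 0 := by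
    linear_combination w 0 * hv - v 0 * hw
  rw [cross_eq_of_sum_eq_zero hv hw, e₁, e₂, abs_mul, abs_two, ← two_mul, ← add_one_mul,
    sqrt_mul (by norm_num), sqrt_sq_eq_abs]
  ring_nf

lemma div_one_add_exp_le {d t t' : ℝ} (ht' : 0 ≤ t') (htt' : t ≤ t')
    (h : √2 * d ≤ t' * (exp (-(√6 * t / 2)) + exp (-(√6 * t' / 2)))) :
    √2 * d * exp (√6 * t / 2) / (1 + exp (-2 * (t' - t) * log 2 / √6)) ≤ t' := by
  have h6 : 0 < √6 := by positivity
  have h66 : √6 * √6 = 6 := mul_self_sqrt (by norm_num)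
  -- `3 ≥ 2 log 2`, i.e. `√6 / 2 ≥ 2 log 2 / √6`
  have hexp : exp (-(√6 * (t' - t) / 2)) ≤ exp (-2 * (t' - t) * log 2 / √6) := by
    rw [exp_le_exp, le_div_iff₀ h6]
    nlinarith [mul_nonneg (sub_nonneg.2 htt') (sub_nonneg.2 (log_two_lt_d9.le.trans
      (by norm_num : (0.6931471808 : ℝ) ≤ 1)))]
  have hscale : exp (√6 * t / 2) * exp (-(√6 * t / 2)) = 1 := by rw [← exp_add]; simp
  have hshift : exp (√6 * t / 2) * exp (-(√6 * t' / 2)) = exp (-(√6 * (t' - t) / 2)) := by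
    rw [← exp_add]; ring_nf
  rw [div_le_iff₀ (by positivity)]
  calc √2 * d * exp (√6 * t / 2)
      ≤ t' * (exp (-(√6 * t / 2)) + exp (-(√6 * t' / 2))) * exp (√6 * t / 2) := by gcongr
    _ = t' * (1 + exp (-(√6 * (t' - t) / 2))) := by rw [← hscale, ← hshift]; ring
    _ ≤ t' * (1 + exp (-2 * (t' - t) * log 2 / √6)) := by gcongr

theorem stmt9_general (v w : Fin 3 → ℝ)
    -- v, w span a lattice M of rank 2 in the plane Π = {u₁+u₂+u₃ = 0}
    (hv : v 0 + v 1 + v 2 = 0) (hw : w 0 + w 1 + w 2 = 0)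
    -- d is the covolume of M : the area of the fundamental parallelogram,
    -- i.e. the Euclidean norm of the cross product v × w
    (d : ℝ)
    (hd : d = Real.sqrt ((v 1 * w 2 - v 2 * w 1) ^ 2 + (v 2 * w 0 - v 0 * w 2) ^ 2 +
      (v 0 * w 1 - v 1 * w 0) ^ 2))
    (k : Fin 3) (u u' : Fin 3 → ℝ)
    -- u and u' are distinct points of M
    (hu : ∃ p q : ℤ, u = p • v + q • w) (hu' : ∃ p q : ℤ, u' = p • v + q • w)
    (hne : u ≠ u')
    -- both lying on the piece C_k of the curve C
    (hC : (Real.exp (u k) = Real.exp (u (k + 1)) - Real.exp (u (k + 2)) ∨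
        Real.exp (u k) = -(Real.exp (u (k + 1)) - Real.exp (u (k + 2)))) ∧
      u k ≤ u (k + 1) ∧ u k ≤ u (k + 2))
    (hC' : (Real.exp (u' k) = Real.exp (u' (k + 1)) - Real.exp (u' (k + 2)) ∨
        Real.exp (u' k) = -(Real.exp (u' (k + 1)) - Real.exp (u' (k + 2)))) ∧
      u' k ≤ u' (k + 1) ∧ u' k ≤ u' (k + 2))
    -- local coordinates t, t'
    (t t' : ℝ) (ht : t = -(Real.sqrt 6 / 2) * u k) (ht' : t' = -(Real.sqrt 6 / 2) * u' k)
    (htt' : t ≤ t') :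
    Real.sqrt 2 * d * Real.exp (Real.sqrt 6 * t / 2) /
      (1 + Real.exp (-2 * (t' - t) * Real.log 2 / Real.sqrt 6)) ≤ t' := by
  obtain ⟨p, q, rfl⟩ := hu
  obtain ⟨p', q', rfl⟩ := hu'
  set x := p • v + q • w
  set y := p' • v + q' • w
  have hx : OnCurvePiece (x k) (x (k + 1)) (x (k + 2)) :=
    ⟨add_rotate_three_zsmul_add_zsmul hv hw p q k, hC⟩
  have hy : OnCurvePiece (y k) (y (k + 1)) (y (k + 2)) :=
    ⟨add_rotate_three_zsmul_add_zsmul hv hw p' q' k, hC'⟩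
  have hcross : cross k x y ≠ 0 := fun h0 ↦ by
    obtain ⟨h₀, h₁, h₂⟩ := hx.eq_of_cross_eq_zero hy h0
    exact hne (funext_rotate_three k h₀ h₁ h₂)
  have h6 : √6 * √6 = 6 := mul_self_sqrt (by norm_num)
  have hyx : y k ≤ x k := by nlinarith [sqrt_nonneg 6]
  refine div_one_add_exp_le (by nlinarith [sqrt_nonneg 6, hy.neg]) htt' ?_
  have hexp : ∀ s, -(√6 * (-(√6 / 2) * s) / 2) = 3 * s / 2 := fun s ↦ by
    linear_combination s / 4 * h6
  calc √2 * d = √6 / 2 * |cross k v w| := by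
        rw [hd, sqrt_crossProduct_sq_eq_abs_cross hv hw k, ← mul_assoc, ← mul_div_assoc,
          ← sqrt_mul (by norm_num)]
        norm_num
    _ ≤ √6 / 2 * (-y k * (exp (3 * x k / 2) + exp (3 * y k / 2))) := by
        gcongr
        exact (abs_cross_le_abs_cross_zsmul_add_zsmul k v w p q p' q' hcross).trans
          (hx.abs_cross_le hy hyx)
    _ = t' * (exp (-(√6 * t / 2)) + exp (-(√6 * t' / 2))) := by
        rw [ht, ht', hexp, hexp]; ring

theorem stmt9 (v w : Fin 3 → ℝ)
    -- v, w span a lattice M of rank 2 in the plane Π = {u₁+u₂+u₃ = 0}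
    (hv : v 0 + v 1 + v 2 = 0) (hw : w 0 + w 1 + w 2 = 0)
    (hind : LinearIndependent ℝ ![v, w])
    -- d is the covolume of M : the area of the fundamental parallelogram,
    -- i.e. the Euclidean norm of the cross product v × w
    (d : ℝ)
    (hd : d = Real.sqrt ((v 1 * w 2 - v 2 * w 1) ^ 2 + (v 2 * w 0 - v 0 * w 2) ^ 2 +
      (v 0 * w 1 - v 1 * w 0) ^ 2))
    (k : Fin 3) (u u' : Fin 3 → ℝ)
    -- u and u' are distinct points of M
    (hu : ∃ p q : ℤ, u = p • v + q • w) (hu' : ∃ p q : ℤ, u' = p • v + q • w)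
    (hne : u ≠ u')
    -- both lying on the piece C_k of the curve C
    (hC : (Real.exp (u k) = Real.exp (u (k + 1)) - Real.exp (u (k + 2)) ∨
        Real.exp (u k) = -(Real.exp (u (k + 1)) - Real.exp (u (k + 2)))) ∧
      u k ≤ u (k + 1) ∧ u k ≤ u (k + 2))
    (hC' : (Real.exp (u' k) = Real.exp (u' (k + 1)) - Real.exp (u' (k + 2)) ∨
        Real.exp (u' k) = -(Real.exp (u' (k + 1)) - Real.exp (u' (k + 2)))) ∧
      u' k ≤ u' (k + 1) ∧ u' k ≤ u' (k + 2))
    -- local coordinates t, t'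
    (t t' : ℝ) (ht : t = -(Real.sqrt 6 / 2) * u k) (ht' : t' = -(Real.sqrt 6 / 2) * u' k)
    (htt' : t ≤ t') :
    Real.sqrt 2 * d * Real.exp (Real.sqrt 6 * t / 2) /
      (1 + Real.exp (-2 * (t' - t) * Real.log 2 / Real.sqrt 6)) ≤ t' :=
  stmt9_general v w hv hw d hd k u u' hu hu' hne hC hC' t t' ht ht' htt'
end

section
/- Let m ∈ ℤ and let (x,y) ∈ ℤ² with gcd(x,y) = 1 and F_m(x,y) ≠ 0. If F_m(x,y) divides (m²+3m+9)·x·y·(x+y) in ℤ, then F_m(x,y) divides m²+3m+9. -/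
/-- The cubic form `F_m(X,Y) = X³ − mX²Y − (m+3)XY² − Y³`. -/
def F (m x y : ℤ) : ℤ := x ^ 3 - m * x ^ 2 * y - (m + 3) * x * y ^ 2 - y ^ 3

theorem stmt14 (m x y : ℤ) (hgcd : Int.gcd x y = 1) (h0 : F m x y ≠ 0)
    (hdvd : F m x y ∣ (m ^ 2 + 3 * m + 9) * x * y * (x + y)) :
    F m x y ∣ m ^ 2 + 3 * m + 9 := by
  have hxy : IsCoprime x y := Int.isCoprime_iff_gcd_eq_one.mpr hgcd
  have hFx : IsCoprime (F m x y) x := by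
    have h : IsCoprime x (-(y ^ 3) + x * (x ^ 2 - m * x * y - (m + 3) * y ^ 2)) :=
      ((hxy.pow_right (n := 3)).neg_right).add_mul_left_right _
    have he : F m x y = -(y ^ 3) + x * (x ^ 2 - m * x * y - (m + 3) * y ^ 2) := by
      unfold F; ring
    rw [he]; exact h.symm
  have hFy : IsCoprime (F m x y) y := by
    have h : IsCoprime y (x ^ 3 + y * (-(m * x ^ 2) - (m + 3) * x * y - y ^ 2)) :=
      (hxy.symm.pow_right (n := 3)).add_mul_left_right _
    have he : F m x y = x ^ 3 + y * (-(m * x ^ 2) - (m + 3) * x * y - y ^ 2) := by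
      unfold F; ring
    rw [he]; exact h.symm
  have hsx : IsCoprime (x + y) x := by
    have := hxy.symm.add_mul_right_left 1
    simpa [add_comm] using this
  have hFs : IsCoprime (F m x y) (x + y) := by
    have h : IsCoprime (x + y) (-(x ^ 3) + (x + y) * (-(y ^ 2) - (m + 2) * x * y + 2 * x ^ 2)) :=
      ((hsx.pow_right (n := 3)).neg_right).add_mul_left_right _
    have he : F m x y = -(x ^ 3) + (x + y) * (-(y ^ 2) - (m + 2) * x * y + 2 * x ^ 2) := by
      unfold F; ring
    rw [he]; exact h.symm
  have h1 : F m x y ∣ (m ^ 2 + 3 * m + 9) * x * y := hFs.dvd_of_dvd_mul_right hdvd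
  have h2 : F m x y ∣ (m ^ 2 + 3 * m + 9) * x := hFy.dvd_of_dvd_mul_right h1
  exact hFx.dvd_of_dvd_mul_right h2
end

section
/- For every integer m, the polynomial f_m(X) = X³ − mX² − (m+3)X − 1 is irreducible over ℚ, its discriminant equals (m²+3m+9)², and its Galois group over ℚ is cyclic of order 3. -/
/-!
If `θ` is a root of `X³ - aX² - (a+3)X - 1`, so are `-1/(1+θ)` and `-(1+θ)/θ`: the Möbius map
`θ ↦ -1/(1+θ)` of order three permutes the roots. Hence the cubic splits over `F(θ)`, and when it is
irreducible its splitting field has degree 3, so the Galois group has prime order 3. For `a = m ∈ ℤ`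
irreducibility is the rational root test: a rational root would be an integer dividing 1, and
`f_m(1) = -2m - 3`, `f_m(-1) = 1`. Finally, for these three roots the product of the differences is
`(θ² + θ + 1)³ / (θ² + θ)²`, which the equation of `θ` turns into `a² + 3a + 9`.
-/

open Polynomial

/-- The simplest cubic polynomial `f_m(X) = X³ − mX² − (m+3)X − 1` over `ℚ`. -/
noncomputable def f (m : ℤ) : ℚ[X] :=
  X ^ 3 - C (m : ℚ) * X ^ 2 - C ((m : ℚ) + 3) * X - 1

section CommRing

variable {R : Type*} [CommRing R]

noncomputable def simplestCubic (a : R) : R[X] :=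
  X ^ 3 - C a * X ^ 2 - C (a + 3) * X - 1

lemma monic_simplestCubic (a : R) : (simplestCubic a).Monic := by
  unfold simplestCubic; monicity!

lemma natDegree_simplestCubic [Nontrivial R] (a : R) : (simplestCubic a).natDegree = 3 := by
  unfold simplestCubic; compute_degree!

@[simp]
lemma eval_simplestCubic (a x : R) :
    (simplestCubic a).eval x = x ^ 3 - a * x ^ 2 - (a + 3) * x - 1 := by
  simp [simplestCubic, map_ofNat]

@[simp]
lemma map_simplestCubic {S : Type*} [CommRing S] (φ : R →+* S) (a : R) :
    (simplestCubic a).map φ = simplestCubic (φ a) := by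
  simp [simplestCubic, map_ofNat]

lemma aeval_simplestCubic {A : Type*} [CommRing A] [Algebra R A] (a : R) (x : A) :
    aeval x (simplestCubic a) = (simplestCubic (algebraMap R A a)).eval x := by
  rw [← eval_map_algebraMap, map_simplestCubic]

end CommRing

lemma f_eq_simplestCubic (m : ℤ) : f m = simplestCubic (m : ℚ) := rfl

section Field

variable {K : Type*} [Field K] {a θ : K}

lemma ne_zero_of_isRoot_simplestCubic (h : (simplestCubic a).IsRoot θ) : θ ≠ 0 := by
  rintro rfl
  simp at h

lemma one_add_ne_zero_of_isRoot_simplestCubic (h : (simplestCubic a).IsRoot θ) : 1 + θ ≠ 0 := by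
  intro h'
  rw [IsRoot, eval_simplestCubic] at h
  exact one_ne_zero (by linear_combination h + (-θ ^ 2 + (a + 1) * θ + 2) * h')

lemma simplestCubic_eq_mul_of_isRoot (h : (simplestCubic a).IsRoot θ) :
    simplestCubic a = (X - C θ) * (X - C (-(1 + θ)⁻¹)) * (X - C (-(1 + θ) / θ)) := by
  have h0 := ne_zero_of_isRoot_simplestCubic h
  have h1 := one_add_ne_zero_of_isRoot_simplestCubic h
  rw [IsRoot, eval_simplestCubic] at h
  set u := -(1 + θ)⁻¹ with hu
  set v := -(1 + θ) / θ with hv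
  have hsum : θ + u + v = a := by
    rw [hu, hv]; field_simp; linear_combination h
  have hpair : θ * u + θ * v + u * v = -(a + 3) := by
    rw [hu, hv]; field_simp; linear_combination -h
  have hprod : θ * u * v = 1 := by
    rw [hu, hv]; field_simp
  calc simplestCubic a
      = X ^ 3 - C (θ + u + v) * X ^ 2 + C (θ * u + θ * v + u * v) * X - C (θ * u * v) := by
        rw [hsum, hpair, hprod, simplestCubic, C_neg, C_1]; ring
    _ = _ := by simp only [C_add, C_mul]; ring

lemma prod_sub_roots_eq_of_isRoot_simplestCubic (h : (simplestCubic a).IsRoot θ) :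
    (θ - -(1 + θ)⁻¹) * (θ - -(1 + θ) / θ) * (-(1 + θ)⁻¹ - -(1 + θ) / θ) = a ^ 2 + 3 * a + 9 := by
  have h0 := ne_zero_of_isRoot_simplestCubic h
  have h1 := one_add_ne_zero_of_isRoot_simplestCubic h
  rw [IsRoot, eval_simplestCubic] at h
  field_simp
  linear_combination (a * (θ ^ 2 + θ) + θ ^ 3 + 3 * θ ^ 2 - 1) * h

end Field

lemma irreducible_simplestCubic_intCast (m : ℤ) : Irreducible (simplestCubic (m : ℚ)) := by
  rw [irreducible_iff_roots_eq_zero_of_degree_le_three (by rw [natDegree_simplestCubic]; norm_num)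
    (by rw [natDegree_simplestCubic]), Multiset.eq_zero_iff_forall_notMem]
  intro x hx
  rw [mem_roots (monic_simplestCubic _).ne_zero] at hx
  have hx' : aeval x (simplestCubic m) = 0 := by
    rwa [aeval_simplestCubic, eq_intCast]
  obtain ⟨n, rfl⟩ := isInteger_of_is_root_of_monic (monic_simplestCubic m) hx'
  have hn : n ^ 3 - m * n ^ 2 - (m + 3) * n - 1 = 0 := by
    rw [IsRoot, eq_intCast, eval_simplestCubic] at hx
    exact_mod_cast hx
  have hunit : n ∣ 1 := ⟨n ^ 2 - m * n - (m + 3), by linear_combination -hn⟩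
  rcases Int.isUnit_iff.mp (isUnit_of_dvd_one hunit) with rfl | rfl <;> omega

open IntermediateField in
lemma finrank_eq_natDegree_of_rootSet_subset_adjoin {F E : Type*} [Field F] [Field E] [Algebra F E]
    {p : F[X]} [IsSplittingField F E p] (hp : Irreducible p) {θ : E} (hθ : aeval θ p = 0)
    (h : p.rootSet E ⊆ F⟮θ⟯) : Module.finrank F E = p.natDegree := by
  have htop : F⟮θ⟯ = ⊤ := toSubalgebra_injective <| top_unique <|
    IsSplittingField.adjoin_rootSet E p ▸ Algebra.adjoin_le h
  rw [← finrank_top', ← htop, adjoin.finrank (IsAlgebraic.isIntegral ⟨p, hp.ne_zero, hθ⟩),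
    ← minpoly.eq_of_irreducible hp hθ,
    natDegree_mul_C (inv_ne_zero (leadingCoeff_ne_zero.mpr hp.ne_zero))]

open IntermediateField in
lemma card_gal_simplestCubic {F : Type*} [Field F] [PerfectField F] {a : F}
    (hp : Irreducible (simplestCubic a)) : Nat.card (simplestCubic a).Gal = 3 := by
  obtain ⟨θ, hθ⟩ := Splits.exists_eval_eq_zero (SplittingField.splits (simplestCubic a))
    (by rw [degree_map]; exact (degree_pos_of_irreducible hp).ne')
  rw [map_simplestCubic] at hθ
  have hroots : (simplestCubic a).rootSet (simplestCubic a).SplittingField ⊆ F⟮θ⟯ := by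
    intro x hx
    have hθK : θ ∈ F⟮θ⟯ := mem_adjoin_simple_self F θ
    rw [mem_rootSet, aeval_simplestCubic, simplestCubic_eq_mul_of_isRoot hθ] at hx
    simp only [eval_mul, eval_sub, eval_X, eval_C, mul_eq_zero, sub_eq_zero] at hx
    rcases hx.2 with (rfl | rfl) | rfl
    · exact hθK
    · exact neg_mem (inv_mem (add_mem (one_mem _) hθK))
    · exact div_mem (neg_mem (add_mem (one_mem _) hθK)) hθK
  rw [Gal.card_of_separable (PerfectField.separable_of_irreducible hp),
    finrank_eq_natDegree_of_rootSet_subset_adjoin hp (by rwa [aeval_simplestCubic]) hroots,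
    natDegree_simplestCubic]

theorem stmt16 (m : ℤ) :
    Irreducible (f m) ∧
    (∃ r₁ r₂ r₃ : ℂ, (f m).map (algebraMap ℚ ℂ) = (X - C r₁) * (X - C r₂) * (X - C r₃) ∧
      ((r₁ - r₂) * (r₁ - r₃) * (r₂ - r₃)) ^ 2 = ((m : ℂ) ^ 2 + 3 * (m : ℂ) + 9) ^ 2) ∧
    IsCyclic (f m).Gal ∧ Nat.card (f m).Gal = 3 := by
  rw [f_eq_simplestCubic, map_simplestCubic, map_intCast]
  have hcard := card_gal_simplestCubic (irreducible_simplestCubic_intCast m)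
  have : Fact (Nat.Prime 3) := ⟨Nat.prime_three⟩
  obtain ⟨θ, hθ⟩ := IsAlgClosed.exists_root (simplestCubic (m : ℂ))
    (by rw [degree_eq_natDegree (monic_simplestCubic _).ne_zero, natDegree_simplestCubic]; decide)
  exact ⟨irreducible_simplestCubic_intCast m,
    ⟨θ, _, _, simplestCubic_eq_mul_of_isRoot hθ,
      by rw [prod_sub_roots_eq_of_isRoot_simplestCubic hθ]⟩,
    isCyclic_of_prime_card hcard, hcard⟩
end

section
/- The only integer points on the elliptic curve y² + 3y = x³ − 9 are (x,y) = (3,−6) and (x,y) = (3,3); that is, for all (x,y) ∈ ℤ², y² + 3y = x³ − 9 implies (x,y) = (3,−6) or (x,y) = (3,3). -/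
theorem stmt19 (x y : ℤ) :
    y ^ 2 + 3 * y = x ^ 3 - 9 ↔ (x, y) = (3, -6) ∨ (x, y) = (3, 3) := by
  constructor
  · intro h
    have flt : FermatLastTheoremWith ℤ 3 :=
      fermatLastTheoremFor_iff_int.mp fermatLastTheoremThree
    have key : (y + 6) ^ 3 + (3 - y) ^ 3 = (3 * x) ^ 3 := by linear_combination 27 * h
    have hx0 : x ≠ 0 := by
      rintro rfl
      nlinarith [sq_nonneg (2 * y + 3)]
    have hx3 : ∀ z : ℤ, z ^ 3 = 27 → z = 3 := by
      intro z hz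
      have h2 : (z - 3) * (z ^ 2 + 3 * z + 9) = 0 := by linear_combination hz
      rcases mul_eq_zero.mp h2 with h3 | h3
      · linarith
      · nlinarith [sq_nonneg (2 * z + 3)]
    by_cases ha : y + 6 = 0
    · have hy : y = -6 := by linarith
      subst hy
      have : x ^ 3 = 27 := by linarith
      simp [hx3 x this]
    · by_cases hb : (3 : ℤ) - y = 0
      · have hy : y = 3 := by linarith
        subst hy
        have : x ^ 3 = 27 := by linarith
        simp [hx3 x this]
      · exact absurd key (flt _ _ _ ha hb (by simpa using hx0))
  · rintro (h | h) <;> rw [Prod.ext_iff] at h <;> obtain ⟨rfl, rfl⟩ := h <;> norm_num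
end
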